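/- arXiv:1408.4404 — 7 statements merged into one kernel-verified Lean document; each statement's English description precedes it below -/
import Mathlib

section
/- Let p be a monic polynomial of degree N ≥ 1 over ℂ. Then the representation of a polynomial f as f(z) = Σ_{k=0}^{N-1} z^k F_k(p(z)) with polynomials F_k is unique: if Σ_{k=0}^{N-1} z^k F_k(p(z)) = 0 identically, then all F_k = 0. -/
open Polynomial

private lemma poly_decomp_key (N : ℕ) (hN : 1 ≤ N)
    (p : ℂ[X]) (hmonic : p.Monic) (hdeg : p.natDegree = N)
    (a : Fin N → ℂ) (q : ℂ[X])
    (h : (∑ k : Fin N, C (a k) * X ^ (k : ℕ)) + p * q = 0) :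
    (∀ k, a k = 0) ∧ q = 0 := by
  have hp0 : p ≠ 0 := hmonic.ne_zero
  set r : ℂ[X] := ∑ k : Fin N, C (a k) * X ^ (k : ℕ) with hr
  have hrdeg : r.degree < (N : WithBot ℕ) := by
    simpa using degree_sum_fin_lt a
  have hq : q = 0 := by
    by_contra hq
    have hpq : p * q ≠ 0 := mul_ne_zero hp0 hq
    have h1 : r = -(p * q) := by linear_combination h
    have hr0 : r ≠ 0 := by
      rw [h1]; simpa using hpq
    have hlt : r.natDegree < N := by
      rwa [← natDegree_lt_iff_degree_lt hr0] at hrdeg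
    have hge : N ≤ (p * q).natDegree := by
      rw [natDegree_mul hp0 hq, hdeg]
      exact Nat.le_add_right _ _
    rw [h1, natDegree_neg] at hlt
    omega
  have hrz : r = 0 := by
    have := h
    rw [hq, mul_zero, add_zero] at this
    exact this
  refine ⟨fun k => ?_, hq⟩
  have : r.coeff (k : ℕ) = a k := by
    rw [hr, finset_sum_coeff]
    rw [Finset.sum_eq_single k]
    · simp
    · intro b _ hb
      rw [coeff_C_mul, coeff_X_pow, if_neg (by simpa [eq_comm, Fin.ext_iff] using hb), mul_zero]
    · simp
  rw [hrz] at this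
  simpa using this.symm

private lemma poly_decomp_aux (N : ℕ) (hN : 1 ≤ N)
    (p : ℂ[X]) (hmonic : p.Monic) (hdeg : p.natDegree = N) :
    ∀ n (F : Fin N → ℂ[X]), (∀ k, (F k).natDegree ≤ n) →
      (∑ k : Fin N, X ^ (k : ℕ) * (F k).comp p = 0) → ∀ k, F k = 0 := by
  intro n
  induction n with
  | zero =>
    intro F hFdeg h k
    have hFc : ∀ k, F k = C ((F k).coeff 0) := fun k =>
      eq_C_of_natDegree_le_zero (hFdeg k)
    have h' : (∑ j : Fin N, C ((F j).coeff 0) * X ^ (j : ℕ)) + p * 0 = 0 := by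
      rw [mul_zero, add_zero, ← h]
      refine Finset.sum_congr rfl fun j _ => ?_
      conv_rhs => rw [hFc j]
      rw [C_comp, mul_comm]
    obtain ⟨ha, -⟩ := poly_decomp_key N hN p hmonic hdeg _ 0 h'
    rw [hFc k, ha k, map_zero]
  | succ n ih =>
    intro F hFdeg h k
    set G : Fin N → ℂ[X] := fun k => (F k).divX with hG
    set a : Fin N → ℂ := fun k => (F k).coeff 0 with ha
    have hsplit : ∀ j, F j = X * G j + C (a j) := fun j => (X_mul_divX_add (F j)).symm
    have h' : (∑ j : Fin N, C (a j) * X ^ (j : ℕ))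
        + p * (∑ j : Fin N, X ^ (j : ℕ) * (G j).comp p) = 0 := by
      rw [← h, Finset.mul_sum, ← Finset.sum_add_distrib]
      refine Finset.sum_congr rfl fun j _ => ?_
      rw [hsplit j]
      simp only [add_comp, mul_comp, X_comp, C_comp]
      ring
    obtain ⟨haz, hqz⟩ := poly_decomp_key N hN p hmonic hdeg a _ h'
    have hGz : ∀ j, G j = 0 := by
      refine ih G (fun j => ?_) hqz
      have h1 : (G j).natDegree = (F j).natDegree - 1 :=
        natDegree_divX_eq_natDegree_tsub_one
      have h2 := hFdeg j
      omega
    rw [hsplit k, hGz k, haz k, mul_zero, map_zero, add_zero]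

/-- Uniqueness of the decomposition `f(z) = ∑_{k=0}^{N-1} z^k F_k(p(z))` for a monic
polynomial `p` of degree `N ≥ 1`: if `∑_{k=0}^{N-1} z^k F_k(p(z)) = 0` then all `F_k = 0`. -/
theorem poly_decomposition_unique (N : ℕ) (hN : 1 ≤ N)
    (p : ℂ[X]) (hmonic : p.Monic) (hdeg : p.natDegree = N)
    (F : Fin N → ℂ[X])
    (h : ∑ k : Fin N, X ^ (k : ℕ) * (F k).comp p = 0) :
    ∀ k, F k = 0 :=
  poly_decomp_aux N hN p hmonic hdeg (⨆ k, (F k).natDegree) F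
    (fun k => by
      classical
      exact le_ciSup (f := fun k => (F k).natDegree) (Finite.bddAbove_range _) k) h
end

section
/- Let p be a monic polynomial of degree N ≥ 1 over a field K. Then the polynomial ring K[z] is a free module over the subring K[p(z)] with basis 1, z, ..., z^{N-1}. -/
open Polynomial

/-! Let `N = deg p`; everything works over any commutative ring. Division by the monic `p` writes
every polynomial as `r + p * q` with `deg r < N`, so induction on the degree shows that the powers
`X ^ k`, `k < N`, span over `R[p]`. An element `q(p)` of `R[p]` has degree `N * deg q`, so the
nonzero terms of a sum `∑ q_k(p) X ^ k` have degrees in pairwise distinct residue classes mod `N`;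
the degree of the sum is then their maximum, and the sum cannot vanish. -/

namespace Polynomial

variable {R : Type*} [CommRing R] {p : R[X]}

theorem Monic.natDegree_comp_right (hp : p.Monic) (q : R[X]) :
    (q.comp p).natDegree = q.natDegree * p.natDegree := by
  rcases eq_or_ne q 0 with rfl | hq
  · simp
  · exact natDegree_comp_eq_of_mul_ne_zero (by simpa [hp.leadingCoeff] using hq)

theorem Monic.natDegree_dvd_of_mem_aeval_range (hp : p.Monic) {f : R[X]}
    (hf : f ∈ (aeval p : R[X] →ₐ[R] R[X]).range) : p.natDegree ∣ f.natDegree := by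
  obtain ⟨q, rfl⟩ := hf
  exact ⟨q.natDegree, by rw [AlgHom.toRingHom_eq_coe, RingHom.coe_coe, ← comp_eq_aeval,
    hp.natDegree_comp_right, mul_comm]⟩

theorem mem_span_X_pow_of_natDegree_lt {N : ℕ} {f : R[X]} (hf : f.natDegree < N) :
    f ∈ Submodule.span R (Set.range fun k : Fin N => (X : R[X]) ^ (k : ℕ)) := by
  rw [as_sum_range' f N hf]
  refine Submodule.sum_mem _ fun i hi => ?_
  rw [← C_mul_X_pow_eq_monomial, ← smul_eq_C_mul]
  exact Submodule.smul_mem _ _ (Submodule.subset_span ⟨⟨i, Finset.mem_range.mp hi⟩, rfl⟩)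

theorem Monic.span_X_pow_aeval_range (hp : p.Monic) (hp0 : 0 < p.natDegree) :
    ⊤ ≤ Submodule.span (aeval p : R[X] →ₐ[R] R[X]).range
      (Set.range fun k : Fin p.natDegree => (X : R[X]) ^ (k : ℕ)) := by
  set M := Submodule.span (aeval p : R[X] →ₐ[R] R[X]).range
    (Set.range fun k : Fin p.natDegree => (X : R[X]) ^ (k : ℕ))
  have hlow (f : R[X]) (hf : f.natDegree < p.natDegree) : f ∈ M :=
    Submodule.span_le_restrictScalars R _ _ (mem_span_X_pow_of_natDegree_lt hf)
  have hmul (f : R[X]) (hf : f ∈ M) : p * f ∈ M := M.smul_mem ⟨p, X, aeval_X p⟩ hf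
  rintro f -
  induction hn : f.natDegree using Nat.strong_induction_on generalizing f with
  | _ n ih =>
    rcases lt_or_ge n p.natDegree with h | h
    · exact hlow f (hn ▸ h)
    rw [← modByMonic_add_div f p]
    refine M.add_mem (hlow _ (natDegree_modByMonic_lt f hp ?_)) (hmul _ (ih _ ?_ rfl))
    · rintro rfl
      simp at hp0
    · rw [natDegree_divByMonic f hp, hn]
      omega

theorem Monic.linearIndependent_X_pow_aeval_range (hp : p.Monic) :
    LinearIndependent (aeval p : R[X] →ₐ[R] R[X]).range
      (fun k : Fin p.natDegree => (X : R[X]) ^ (k : ℕ)) := by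
  classical
  rw [Fintype.linearIndependent_iff]
  intro g hg
  nontriviality R
  set c : Fin p.natDegree → R[X] := fun k => (g k : R[X]) * X ^ (k : ℕ)
  have hsum : ∑ k, c k = 0 := hg
  have hdisj : Set.Pairwise {k | k ∈ Finset.univ ∧ c k ≠ 0} (Function.onFun Ne (degree ∘ c)) := by
    rintro i ⟨-, hi⟩ j ⟨-, hj⟩ hij hdeg
    apply hij
    simp only [Function.comp, c, degree_mul_X_pow,
      degree_eq_natDegree (left_ne_zero_of_mul hi), degree_eq_natDegree (left_ne_zero_of_mul hj)]
      at hdeg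
    norm_cast at hdeg
    obtain ⟨a, ha⟩ := hp.natDegree_dvd_of_mem_aeval_range (g i).2
    obtain ⟨b, hb⟩ := hp.natDegree_dvd_of_mem_aeval_range (g j).2
    have := congrArg (· % p.natDegree) hdeg
    simp only [ha, hb, Nat.mul_add_mod, Nat.mod_eq_of_lt i.2, Nat.mod_eq_of_lt j.2] at this
    exact Fin.ext this
  have hbot := degree_sum_eq_of_disjoint c Finset.univ hdisj
  rw [hsum, degree_zero, eq_comm, Finset.sup_eq_bot_iff] at hbot
  intro k
  exact Subtype.ext (mul_X_pow_eq_zero (degree_eq_bot.mp (hbot k (Finset.mem_univ k))))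

noncomputable def Monic.basisAevalRange (hp : p.Monic) (hp0 : 0 < p.natDegree) :
    Module.Basis (Fin p.natDegree) (aeval p : R[X] →ₐ[R] R[X]).range R[X] :=
  .mk hp.linearIndependent_X_pow_aeval_range (hp.span_X_pow_aeval_range hp0)

@[simp]
theorem Monic.basisAevalRange_apply (hp : p.Monic) (hp0 : 0 < p.natDegree) (k : Fin p.natDegree) :
    hp.basisAevalRange hp0 k = X ^ (k : ℕ) :=
  Module.Basis.mk_apply _ _ k

end Polynomial

/-- For a field `K` and `p ∈ K[z]` monic of degree `N ≥ 1`, the polynomial ring `K[z]`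
is a free module over the subring `K[p(z)]` (the image of `K[X]` under `X ↦ p(z)`),
with basis `1, z, …, z^{N-1}`. -/
theorem free_over_subring_of_p (K : Type*) [Field K] (N : ℕ) (hN : 1 ≤ N)
    (p : K[X]) (hmonic : p.Monic) (hdeg : p.natDegree = N) :
    ∃ b : Module.Basis (Fin N) ((aeval p : K[X] →ₐ[K] K[X]).range) K[X],
      ∀ k : Fin N, b k = X ^ (k : ℕ) := by
  subst hdeg
  exact ⟨hmonic.basisAevalRange hN, hmonic.basisAevalRange_apply hN⟩
end

section
/- Let p be a monic polynomial of degree N with distinct roots, and let α, β ∈ ℂ be such that p(z) = α has distinct roots w_1(α),...,w_N(α), p(z) = β has distinct roots w_1(β),...,w_N(β), and w_u(α) ≠ w_v(β) for all u, v. Then for each v, Σ_{u=1}^N 1/(p'(w_u(α)) · (w_u(α) - w_v(β))) = 1/(α - β). -/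
open Polynomial Finset

/-- Let `p` be monic of degree `N`, and `α ≠ β` such that `p(z) = α` has the `N` distinct
(simple) roots `wα u`, `p(z) = β` has the `N` distinct (simple) roots `wβ v`, and
`wα u ≠ wβ v` for all `u, v`.  Then for each `v`,
`∑_u 1/(p'(wα u)·(wα u - wβ v)) = 1/(α - β)`. -/
theorem resolvent_partial_fraction_sum (N : ℕ) (hN : 0 < N)
    (p : ℂ[X]) (hmonic : p.Monic) (hdeg : p.natDegree = N)
    (α β : ℂ) (hαβ : α ≠ β)
    (wα wβ : Fin N → ℂ)
    (hwα : Function.Injective wα) (hwβ : Function.Injective wβ)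
    (hα : ∀ u, p.eval (wα u) = α) (hβ : ∀ v, p.eval (wβ v) = β)
    (hα' : ∀ u, p.derivative.eval (wα u) ≠ 0)
    (hβ' : ∀ v, p.derivative.eval (wβ v) ≠ 0)
    (hdisj : ∀ u v, wα u ≠ wβ v) :
    ∀ v, ∑ u, 1 / (p.derivative.eval (wα u) * (wα u - wβ v)) = 1 / (α - β) := by
  classical
  have : Nonempty (Fin N) := ⟨⟨0, hN⟩⟩
  -- q := p - C α equals the nodal polynomial of the wα
  set q : ℂ[X] := p - C α with hq_def
  have hqmonic : q.Monic := by
    have : (C α).degree < p.degree := by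
      apply lt_of_le_of_lt (degree_C_le)
      rw [degree_eq_natDegree hmonic.ne_zero, hdeg]
      exact_mod_cast hN
    exact (hmonic.sub_of_left this)
  have hqdeg : q.natDegree = N := by
    have hdq : q.degree = p.degree := by
      rw [hq_def, sub_eq_add_neg]
      apply degree_add_eq_left_of_degree_lt
      rw [degree_neg]
      apply lt_of_le_of_lt (degree_C_le)
      rw [degree_eq_natDegree hmonic.ne_zero, hdeg]
      exact_mod_cast hN
    rw [← hdeg]
    exact natDegree_eq_of_degree_eq hdq
  have hnodal : q = Lagrange.nodal Finset.univ wα := by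
    by_contra hne
    have hdiff : (q - Lagrange.nodal Finset.univ wα) = 0 := by
      apply eq_zero_of_natDegree_lt_card_of_eval_eq_zero _ hwα
      · intro u
        rw [eval_sub, Lagrange.eval_nodal_at_node (Finset.mem_univ u)]
        simp [hq_def, hα u]
      · have hdlt : (q - Lagrange.nodal Finset.univ wα).degree < q.degree := by
          apply degree_sub_lt
          · rw [Lagrange.degree_nodal, degree_eq_natDegree hqmonic.ne_zero, hqdeg]
            simp
          · exact hqmonic.ne_zero
          · rw [hqmonic.leadingCoeff, (Lagrange.nodal_monic).leadingCoeff]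
        rw [Fintype.card_fin]
        have := natDegree_lt_natDegree (sub_ne_zero_of_ne hne) hdlt
        omega
    exact hne (sub_eq_zero.mp hdiff)
  -- evaluation identities
  have hprod : ∀ x : ℂ, p.eval x - α = ∏ u, (x - wα u) := by
    intro x
    have := congrArg (eval x) hnodal
    rwa [eval_sub, eval_C, Lagrange.eval_nodal] at this
  have hderiv : ∀ u, p.derivative.eval (wα u) = ∏ j ∈ Finset.univ.erase u, (wα u - wα j) := by
    intro u
    have h1 : derivative p = derivative q := by
      rw [hq_def]; simp
    rw [h1, hnodal, Lagrange.eval_nodal_derivative_eval_node_eq (Finset.mem_univ u),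
      Lagrange.eval_nodal]
  intro v
  set z := wβ v with hz_def
  have hzprod : β - α = ∏ u, (z - wα u) := by rw [← hβ v, hprod]
  -- evaluate the sum of Lagrange basis polynomials at z
  have hbasis : ∑ u, eval z (Lagrange.basis Finset.univ wα u) = 1 := by
    rw [← eval_finset_sum, Lagrange.sum_basis hwα.injOn Finset.univ_nonempty, eval_one]
  have hterm : ∀ u, eval z (Lagrange.basis Finset.univ wα u)
      = (∏ j ∈ Finset.univ.erase u, (wα u - wα j))⁻¹ * ∏ j ∈ Finset.univ.erase u, (z - wα j) := by
    intro u
    rw [Lagrange.basis, eval_prod]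
    rw [← Finset.prod_inv_distrib, ← Finset.prod_mul_distrib]
    apply Finset.prod_congr rfl
    intro j _
    simp [Lagrange.basisDivisor]
  -- put it together
  have key : ∀ u, 1 / (p.derivative.eval (wα u) * (wα u - z))
      = (α - β)⁻¹ * eval z (Lagrange.basis Finset.univ wα u) := by
    intro u
    rw [hterm u, hderiv u]
    set d := ∏ j ∈ Finset.univ.erase u, (wα u - wα j) with hd
    set P := ∏ j ∈ Finset.univ.erase u, (z - wα j) with hP
    have hd0 : d ≠ 0 := by rw [hd, ← hderiv u]; exact hα' u
    have hP0 : P ≠ 0 := by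
      rw [hP]
      apply Finset.prod_ne_zero_iff.mpr
      intro j _
      exact sub_ne_zero_of_ne (fun h => hdisj j v h.symm)
    have hzu : wα u - z ≠ 0 := sub_ne_zero_of_ne (hdisj u v)
    have hαβ' : α - β = (wα u - z) * P := by
      have : β - α = (z - wα u) * P := by
        rw [hzprod, hP, ← Finset.mul_prod_erase _ _ (Finset.mem_univ u)]
      have h2 : α - β = -(β - α) := by ring
      rw [h2, this]; ring
    rw [hαβ']
    field_simp
  calc ∑ u, 1 / (p.derivative.eval (wα u) * (wα u - z))
      = ∑ u, (α - β)⁻¹ * eval z (Lagrange.basis Finset.univ wα u) := by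
        exact Finset.sum_congr rfl fun u _ => key u
    _ = (α - β)⁻¹ * ∑ u, eval z (Lagrange.basis Finset.univ wα u) := by
        rw [Finset.mul_sum]
    _ = 1 / (α - β) := by rw [hbasis, mul_one, one_div]
end

section
/- Let p(z) = Π_{j=1}^n (z-w_j)^{μ_j}, deg p = N, with distinct w_j. For a polynomial f, write f(z) = Z(z)F(p(z)) with F the (unique) ℂ^N-valued polynomial, Z(z) = (1,...,z^{N-1}). Then F(0) = V^{-1} C_w f, where V is the generalized Vandermonde matrix with row blocks Z(w_j), Z'(w_j),...,Z^{(μ_j-1)}(w_j), and C_w f is the column vector with blocks (f(w_j), f'(w_j), ..., f^{(μ_j-1)}(w_j)). -/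
open Polynomial

/-- If `(X - a)^μ ∣ q` and `k < μ`, then the `k`-th derivative of `q` vanishes at `a`. -/
lemma eval_iterate_derivative_eq_zero_of_pow_dvd {a : ℂ} {μ k : ℕ} (hk : k < μ) {q : ℂ[X]}
    (h : (X - C a) ^ μ ∣ q) : (Polynomial.derivative^[k] q).eval a = 0 := by
  have h2 : (X - C a) ∣ Polynomial.derivative^[k] q :=
    (dvd_pow_self _ (Nat.sub_ne_zero_of_lt hk)).trans
      (pow_sub_dvd_iterate_derivative_of_pow_dvd k h)
  exact dvd_iff_isRoot.mp h2

lemma eval_iter_deriv_sum {ι : Type*} (s : Finset ι) (y : ι → ℂ) (m : ι → ℕ) (k : ℕ) (t : ℂ) :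
    (Polynomial.derivative^[k] (∑ c ∈ s, C (y c) * X ^ m c)).eval t =
      ∑ c ∈ s, y c * (Polynomial.derivative^[k] (X ^ m c : ℂ[X])).eval t := by
  rw [iterate_derivative_sum, eval_finset_sum]
  exact Finset.sum_congr rfl fun c _ => by rw [iterate_derivative_C_mul, eval_mul, eval_C]

/-- With `p(z) = ∏_j (z - w_j)^{μ_j}` of degree `N` and `f(z) = Z(z)F(p(z))`
(`Z(z) = (1, z, …, z^{N-1})`), the value `F(0)` is given by `V⁻¹ C_w f`, where `V` is the
generalized Vandermonde matrix and `C_w f` collects the derivatives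
`f^{(k)}(w_j)`, `0 ≤ k < μ_j`. -/
theorem F_zero_eq_Vinv_Cw (n N : ℕ) (w : Fin n → ℂ) (hw : Function.Injective w)
    (μ : Fin n → ℕ) (hμ : ∀ j, 1 ≤ μ j) (hN : ∑ j, μ j = N)
    (p : ℂ[X]) (hp : p = ∏ j, (X - C (w j)) ^ μ j)
    (e : ((j : Fin n) × Fin (μ j)) ≃ Fin N)
    (V : Matrix ((j : Fin n) × Fin (μ j)) ((j : Fin n) × Fin (μ j)) ℂ)
    (hV : ∀ jk c, V jk c =
      (Polynomial.derivative^[(jk.2 : ℕ)] (X ^ ((e c : Fin N) : ℕ) : ℂ[X])).eval (w jk.1))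
    (f : ℂ[X]) (F : Fin N → ℂ[X])
    (hF : f = ∑ k : Fin N, X ^ (k : ℕ) * (F k).comp p)
    (Cw : ((j : Fin n) × Fin (μ j)) → ℂ)
    (hCw : ∀ jk, Cw jk = (Polynomial.derivative^[(jk.2 : ℕ)] f).eval (w jk.1)) :
    (fun c => (F (e c)).eval 0) = V⁻¹.mulVec Cw := by
  -- dvd facts about `p`
  have hdvdp : ∀ j : Fin n, (X - C (w j)) ^ μ j ∣ p := fun j => by
    rw [hp]; exact Finset.dvd_prod_of_mem _ (Finset.mem_univ j)
  have hp_monic : p.Monic := by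
    rw [hp]; exact monic_prod_of_monic _ _ fun j _ => (monic_X_sub_C (w j)).pow _
  have hdegp : p.natDegree = N := by
    rw [hp, natDegree_prod _ _ fun j _ => pow_ne_zero _ (X_sub_C_ne_zero (w j))]
    simp [natDegree_pow, hN]
  -- the candidate solution vector
  set x : ((j : Fin n) × Fin (μ j)) → ℂ := fun c => (F (e c)).eval 0 with hxdef
  -- Step 1 : V * x = Cw
  have hsplit : ∀ m : Fin N, ∃ r : ℂ[X],
      (F m).comp p = C ((F m).eval 0) + p * r := by
    intro m
    have hXdvd : (X : ℂ[X]) ∣ F m - C ((F m).eval 0) := by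
      rw [X_dvd_iff, coeff_zero_eq_eval_zero]
      simp
    obtain ⟨r, hr⟩ := hXdvd
    refine ⟨r.comp p, ?_⟩
    have h2 : (F m - C ((F m).eval 0)).comp p = (X * r).comp p := by rw [← hr]
    rw [sub_comp, C_comp, mul_comp, X_comp] at h2
    linear_combination h2
  choose r hr using hsplit
  have hf2 : f = (∑ m : Fin N, C ((F m).eval 0) * X ^ (m : ℕ))
      + p * (∑ m : Fin N, X ^ (m : ℕ) * r m) := by
    rw [hF, Finset.mul_sum, ← Finset.sum_add_distrib]
    exact Finset.sum_congr rfl fun m _ => by rw [hr m]; ring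
  have key : V.mulVec x = Cw := by
    funext jk
    obtain ⟨j, k⟩ := jk
    rw [hCw, hf2]
    have hadd : Polynomial.derivative^[(k : ℕ)]
        ((∑ m : Fin N, C ((F m).eval 0) * X ^ (m : ℕ)) + p * (∑ m : Fin N, X ^ (m : ℕ) * r m))
        = Polynomial.derivative^[(k : ℕ)] (∑ m : Fin N, C ((F m).eval 0) * X ^ (m : ℕ))
          + Polynomial.derivative^[(k : ℕ)] (p * (∑ m : Fin N, X ^ (m : ℕ) * r m)) := by
      simp_rw [← Module.End.pow_apply, map_add]
    rw [hadd, eval_add]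
    have hz : (Polynomial.derivative^[(k : ℕ)]
        (p * (∑ m : Fin N, X ^ (m : ℕ) * r m))).eval (w j) = 0 :=
      eval_iterate_derivative_eq_zero_of_pow_dvd k.isLt ((hdvdp j).mul_right _)
    rw [hz, add_zero, eval_iter_deriv_sum]
    -- reindex the sum via `e`
    rw [show (Matrix.mulVec V x ⟨j, k⟩) = ∑ c, V ⟨j, k⟩ c * x c from rfl]
    rw [← Equiv.sum_comp e (fun m : Fin N => (F m).eval 0 *
      (Polynomial.derivative^[(k : ℕ)] (X ^ (m : ℕ) : ℂ[X])).eval (w j))]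
    exact (Finset.sum_congr rfl fun c _ => by rw [hV]; ring).symm
  -- Step 2 : V is invertible
  have hVunit : IsUnit V.det := by
    rw [← Matrix.isUnit_iff_isUnit_det, ← Matrix.mulVec_injective_iff_isUnit]
    have h0 : ∀ y, V.mulVec y = 0 → y = 0 := by
      intro y hy
      by_contra hy0
      have hc : ∃ c, y c ≠ 0 := by
        by_contra h
        push_neg at h
        exact hy0 (funext h)
      obtain ⟨c0, hc0⟩ := hc
      set q : ℂ[X] := ∑ c, C (y c) * X ^ ((e c : Fin N) : ℕ) with hq
      -- q ≠ 0 since its coefficient at `e c0` is `y c0`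
      have hcoeff : ∀ m : Fin N, q.coeff (m : ℕ) = y (e.symm m) := by
        intro m
        rw [hq, ← Equiv.sum_comp e.symm
          (fun c => C (y c) * X ^ ((e c : Fin N) : ℕ))]
        simp only [Equiv.apply_symm_apply]
        rw [finset_sum_coeff]
        rw [Finset.sum_eq_single m]
        · simp
        · intro b _ hb
          rw [coeff_C_mul, coeff_X_pow,
            if_neg (fun h : (m : ℕ) = (b : ℕ) => hb (Fin.val_injective h.symm)), mul_zero]
        · intro h; exact absurd (Finset.mem_univ m) h
      have hqne : q ≠ 0 := by
        intro h
        apply hc0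
        have := hcoeff (e c0)
        rw [h, coeff_zero, Equiv.symm_apply_apply] at this
        exact this.symm
      -- each derivative condition
      have hroot : ∀ j : Fin n, ∀ k : ℕ, k < μ j →
          (Polynomial.derivative^[k] q).eval (w j) = 0 := by
        intro j k hk
        have h2 : ∑ c, V ⟨j, ⟨k, hk⟩⟩ c * y c = 0 := by
          have := congrFun hy ⟨j, ⟨k, hk⟩⟩
          rw [show (Matrix.mulVec V y ⟨j, ⟨k, hk⟩⟩) = ∑ c, V ⟨j, ⟨k, hk⟩⟩ c * y c from rfl] at this
          simpa using this
        rw [hq, eval_iter_deriv_sum, ← h2]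
        exact Finset.sum_congr rfl fun c _ => by rw [hV]; ring
      -- hence (X - w j)^{μ j} ∣ q
      have hdvdq : ∀ j : Fin n, (X - C (w j)) ^ μ j ∣ q := by
        intro j
        have hlt : μ j - 1 < q.rootMultiplicity (w j) := by
          apply lt_rootMultiplicity_of_isRoot_iterate_derivative_of_mem_nonZeroDivisors' hqne
          · intro m hm
            exact hroot j m (lt_of_le_of_lt hm (Nat.sub_lt (hμ j) one_pos))
          · intro m _ hm
            exact mem_nonZeroDivisors_of_ne_zero (by exact_mod_cast hm)
        have hle : μ j ≤ q.rootMultiplicity (w j) := by omega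
        exact (pow_dvd_pow _ hle).trans (q.pow_rootMultiplicity_dvd (w j))
      have hpq : p ∣ q := by
        rw [hp]
        refine Fintype.prod_dvd_of_coprime ?_ hdvdq
        intro i j hij
        exact ((pairwise_coprime_X_sub_C hw hij).pow)
      -- degree contradiction
      have hNpos : 0 < N := lt_of_le_of_lt (Nat.zero_le _) (e c0).isLt
      have hdegq : q.degree < N := by
        rw [hq]
        apply lt_of_le_of_lt (degree_sum_le _ _)
        have hbot : (⊥ : WithBot ℕ) < ((N : ℕ) : WithBot ℕ) := by
          exact_mod_cast WithBot.bot_lt_coe N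
        rw [Finset.sup_lt_iff hbot]
        intro c _
        apply lt_of_le_of_lt (degree_C_mul_X_pow_le _ _)
        exact_mod_cast (e c).isLt
      have := Polynomial.degree_le_of_dvd hpq hqne
      rw [degree_eq_natDegree hp_monic.ne_zero, hdegp] at this
      exact absurd (lt_of_le_of_lt this hdegq) (lt_irrefl _)
    intro a b hab
    have : a - b = 0 := h0 (a - b) (by rw [Matrix.mulVec_sub, hab, sub_self])
    exact sub_eq_zero.mp this
  -- conclude
  rw [← key, Matrix.mulVec_mulVec, Matrix.nonsing_inv_mul _ hVunit, Matrix.one_mulVec]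
end

section
/- Let p(z) = Π_{j=1}^n (z - w_j)^{μ_j} of degree N with distinct roots. Define R_0^{(p)} on polynomials by (R_0^{(p)} f)(z) = (f(z) - Z(z) V^{-1} C_w f)/p(z) (the division is exact). If f(z) = Z(z) F(p(z)) then (R_0^{(p)} f)(z) = Z(z)(R_0 F)(p(z)), where (R_0 F)(z) = (F(z) - F(0))/z is the backward shift applied entrywise. -/
/-!
Since `F = F(0) + z · R_0 F`, we have `f = r + p h` with `r = Σ z^k F_k(0)` of degree `< N` and
`h = Σ z^k (R_0 F_k)(p)`. The Hermite data `C_w` vanish exactly on the multiples of `p`, so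
`C_w f = C_w r = V a`, where `a` is the coefficient vector of `r`. The matrix `V` is invertible,
because a polynomial of degree `< N = deg p` with vanishing Hermite data is divisible by `p`,
hence zero. So `Z V⁻¹ C_w f = r` and `f - Z V⁻¹ C_w f = p h`.
-/

open Polynomial

theorem Polynomial.X_sub_C_pow_dvd_iff_isRoot_iterate_derivative {R : Type*} [CommRing R]
    [IsDomain R] [CharZero R] {q : R[X]} {a : R} {m : ℕ} :
    (X - C a) ^ m ∣ q ↔ ∀ k < m, (derivative^[k] q).IsRoot a := by
  rcases eq_or_ne q 0 with rfl | hq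
  · simp [iterate_map_zero]
  cases m with
  | zero => simp
  | succ m =>
    simp only [← le_rootMultiplicity_iff hq, Nat.succ_le_iff, Nat.lt_succ_iff,
      lt_rootMultiplicity_iff_isRoot_iterate_derivative hq]

section HermiteData

variable {K : Type*} [Field K] {n : ℕ} (w : Fin n → K) (μ : Fin n → ℕ)

/-- The paper's `C_w`. -/
noncomputable def hermiteData : K[X] →ₗ[K] ((j : Fin n) × Fin (μ j)) → K :=
  LinearMap.pi fun jk => (leval (w jk.1)).comp (derivative ^ (jk.2 : ℕ))

theorem hermiteData_apply (q : K[X]) (jk : (j : Fin n) × Fin (μ j)) :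
    hermiteData w μ q jk = (derivative^[jk.2] q).eval (w jk.1) := by
  simp [hermiteData, Module.End.pow_apply]

theorem hermiteData_eq_zero_iff [CharZero K] (hw : Function.Injective w) {q : K[X]} :
    hermiteData w μ q = 0 ↔ ∏ j, (X - C (w j)) ^ μ j ∣ q := by
  have hcop : Pairwise (Function.onFun IsCoprime fun j => (X - C (w j)) ^ μ j) :=
    fun i j hij => (pairwise_coprime_X_sub_C hw hij).pow
  simp only [funext_iff, Pi.zero_apply, hermiteData_apply, Sigma.forall, ← IsRoot.def]
  constructor
  · intro h
    exact Fintype.prod_dvd_of_coprime hcop fun j =>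
      X_sub_C_pow_dvd_iff_isRoot_iterate_derivative.mpr fun k hk => h j ⟨k, hk⟩
  · intro h j k
    have hj : (X - C (w j)) ^ μ j ∣ q :=
      (Finset.dvd_prod_of_mem (fun j => (X - C (w j)) ^ μ j) (Finset.mem_univ j)).trans h
    exact X_sub_C_pow_dvd_iff_isRoot_iterate_derivative.mp hj k k.isLt

end HermiteData

section OfCoeffVec

variable {K : Type*} [Field K] {ι : Type*} {N : ℕ} (e : ι ≃ Fin N)

/-- The paper's `Z(z) a`, the coordinates of `a` being ordered along `e`. -/
noncomputable def ofCoeffVec (a : ι → K) : K[X] :=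
  ∑ i : Fin N, C (a (e.symm i)) * X ^ (i : ℕ)

theorem coeff_ofCoeffVec (a : ι → K) (i : Fin N) : (ofCoeffVec e a).coeff i = a (e.symm i) := by
  simp [ofCoeffVec, coeff_C_mul, coeff_X_pow, Fin.val_inj]

theorem degree_ofCoeffVec_lt (a : ι → K) : (ofCoeffVec e a).degree < N :=
  degree_sum_fin_lt _

theorem ofCoeffVec_eq_zero_iff {a : ι → K} : ofCoeffVec e a = 0 ↔ a = 0 := by
  refine ⟨fun h => funext fun c => ?_, fun h => by simp [h, ofCoeffVec]⟩
  simpa [h] using (coeff_ofCoeffVec e a (e c)).symm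

end OfCoeffVec

section ConfluentVandermonde

variable {K : Type*} [Field K] {n N : ℕ} (w : Fin n → K) (μ : Fin n → ℕ)

theorem natDegree_prod_X_sub_C_pow : (∏ j, (X - C (w j)) ^ μ j).natDegree = ∑ j, μ j := by
  rw [natDegree_prod _ _ fun j _ => pow_ne_zero _ (X_sub_C_ne_zero _)]
  simp

variable (e : ((j : Fin n) × Fin (μ j)) ≃ Fin N)

noncomputable def confluentVandermonde :
    Matrix ((j : Fin n) × Fin (μ j)) ((j : Fin n) × Fin (μ j)) K :=
  Matrix.of fun jk c => hermiteData w μ (X ^ (e c : ℕ)) jk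

theorem confluentVandermonde_mulVec (a : ((j : Fin n) × Fin (μ j)) → K) :
    (confluentVandermonde w μ e).mulVec a = hermiteData w μ (ofCoeffVec e a) := by
  funext jk
  simp only [Matrix.mulVec, dotProduct, confluentVandermonde, Matrix.of_apply, ofCoeffVec,
    map_sum, ← smul_eq_C_mul, map_smul, Finset.sum_apply, Pi.smul_apply, smul_eq_mul]
  rw [← Equiv.sum_comp e]
  simp [mul_comm]

theorem isUnit_confluentVandermonde [CharZero K] (hw : Function.Injective w) :
    IsUnit (confluentVandermonde w μ e) := by
  rw [← Matrix.mulVec_injective_iff_isUnit, ← Matrix.coe_mulVecLin, ← LinearMap.ker_eq_bot,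
    LinearMap.ker_eq_bot']
  intro a ha
  rw [Matrix.mulVecLin_apply, confluentVandermonde_mulVec, hermiteData_eq_zero_iff w μ hw] at ha
  have hp : (∏ j, (X - C (w j)) ^ μ j).Monic :=
    monic_prod_of_monic _ _ fun j _ => (monic_X_sub_C _).pow _
  refine (ofCoeffVec_eq_zero_iff e).mp (eq_zero_of_dvd_of_degree_lt ha ?_)
  have hN : ∑ j, μ j = N := by simpa using Fintype.card_congr e
  rw [degree_eq_natDegree hp.ne_zero, natDegree_prod_X_sub_C_pow, hN]
  exact degree_ofCoeffVec_lt e a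

end ConfluentVandermonde

theorem Polynomial.sum_X_pow_mul_comp_eq {R : Type*} [CommSemiring R] {N : ℕ} (p : R[X])
    (F : Fin N → R[X]) :
    ∑ k : Fin N, X ^ (k : ℕ) * (F k).comp p
      = ∑ k : Fin N, C ((F k).coeff 0) * X ^ (k : ℕ)
        + p * ∑ k : Fin N, X ^ (k : ℕ) * (F k).divX.comp p := by
  rw [Finset.mul_sum, ← Finset.sum_add_distrib]
  refine Finset.sum_congr rfl fun k _ => ?_
  conv_lhs => rw [← X_mul_divX_add (F k)]
  rw [add_comp, mul_comp, C_comp, X_comp]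
  ring

theorem R0p_intertwines_general (n N : ℕ) (w : Fin n → ℂ) (hw : Function.Injective w)
    (μ : Fin n → ℕ)
    (p : ℂ[X]) (hp : p = ∏ j, (X - C (w j)) ^ μ j)
    (e : ((j : Fin n) × Fin (μ j)) ≃ Fin N)
    (V : Matrix ((j : Fin n) × Fin (μ j)) ((j : Fin n) × Fin (μ j)) ℂ)
    (hV : ∀ jk c, V jk c =
      (Polynomial.derivative^[(jk.2 : ℕ)] (X ^ ((e c : Fin N) : ℕ) : ℂ[X])).eval (w jk.1))
    (f : ℂ[X]) (F : Fin N → ℂ[X])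
    (hF : f = ∑ k : Fin N, X ^ (k : ℕ) * (F k).comp p)
    (Cw : ((j : Fin n) × Fin (μ j)) → ℂ)
    (hCw : ∀ jk, Cw jk = (Polynomial.derivative^[(jk.2 : ℕ)] f).eval (w jk.1)) :
    f - ∑ i : Fin N, C (V⁻¹.mulVec Cw (e.symm i)) * X ^ (i : ℕ)
      = p * ∑ k : Fin N, X ^ (k : ℕ) * ((F k).divX.comp p) := by
  have hV_eq : V = confluentVandermonde w μ e :=
    Matrix.ext fun jk c => by rw [hV, confluentVandermonde, Matrix.of_apply, hermiteData_apply]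
  have hCw_eq : Cw = hermiteData w μ f := funext fun jk => by rw [hCw, hermiteData_apply]
  set h := ∑ k : Fin N, X ^ (k : ℕ) * ((F k).divX.comp p)
  set g := fun c => (F (e c)).coeff 0
  have hsplit : f = ofCoeffVec e g + p * h := by
    rw [hF, sum_X_pow_mul_comp_eq]
    simp [ofCoeffVec, g, h]
  have hdata : Cw = V.mulVec g := by
    have hph : hermiteData w μ (p * h) = 0 :=
      (hermiteData_eq_zero_iff w μ hw).mpr (hp ▸ dvd_mul_right _ _)
    rw [hCw_eq, hsplit, map_add, hph, add_zero, hV_eq, confluentVandermonde_mulVec]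
  have hdet : IsUnit V.det := by
    rw [← Matrix.isUnit_iff_isUnit_det, hV_eq]
    exact isUnit_confluentVandermonde w μ e hw
  have hsolve : V⁻¹.mulVec Cw = g := by
    rw [hdata, Matrix.mulVec_mulVec, Matrix.nonsing_inv_mul V hdet, Matrix.one_mulVec]
  change f - ofCoeffVec e (V⁻¹.mulVec Cw) = _
  rw [hsolve, hsplit, add_sub_cancel_left]

/-- The operator `R_0^{(p)} f = (f - Z V⁻¹ C_w f)/p` (exact division) intertwines with the
entrywise backward shift `R_0 F = (F(z) - F(0))/z`: if `f(z) = Z(z)F(p(z))` then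
`(R_0^{(p)} f)(z) = Z(z)(R_0 F)(p(z))`, i.e.
`f - Z V⁻¹ C_w f = p · ∑_k z^k (R_0 F)_k(p(z))`. -/
theorem R0p_intertwines (n N : ℕ) (w : Fin n → ℂ) (hw : Function.Injective w)
    (μ : Fin n → ℕ) (hμ : ∀ j, 1 ≤ μ j) (hN : ∑ j, μ j = N)
    (p : ℂ[X]) (hp : p = ∏ j, (X - C (w j)) ^ μ j)
    (e : ((j : Fin n) × Fin (μ j)) ≃ Fin N)
    (V : Matrix ((j : Fin n) × Fin (μ j)) ((j : Fin n) × Fin (μ j)) ℂ)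
    (hV : ∀ jk c, V jk c =
      (Polynomial.derivative^[(jk.2 : ℕ)] (X ^ ((e c : Fin N) : ℕ) : ℂ[X])).eval (w jk.1))
    (f : ℂ[X]) (F : Fin N → ℂ[X])
    (hF : f = ∑ k : Fin N, X ^ (k : ℕ) * (F k).comp p)
    (Cw : ((j : Fin n) × Fin (μ j)) → ℂ)
    (hCw : ∀ jk, Cw jk = (Polynomial.derivative^[(jk.2 : ℕ)] f).eval (w jk.1)) :
    f - ∑ i : Fin N, C (V⁻¹.mulVec Cw (e.symm i)) * X ^ (i : ℕ)
      = p * ∑ k : Fin N, X ^ (k : ℕ) * ((F k).divX.comp p) :=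
  R0p_intertwines_general n N w hw μ p hp e V hV f F hF Cw hCw
end

section
/- Every rational function f analytic at the distinct points w_1,...,w_n (i.e., with no poles among them) can be written as f(z) = Z(z) C (I - p(z) A)^{-1} B, where p(z) = Π_j (z - w_j)^{μ_j} has degree N, Z(z) = (1, z, ..., z^{N-1}), and A ∈ ℂ^{m×m}, B ∈ ℂ^{m×1}, C ∈ ℂ^{N×m} are constant matrices, the identity holding for all z with I - p(z)A invertible (equivalently as an identity of rational functions). -/
open Polynomial

private lemma eval_fin_sum' {M : ℕ} {s : ℂ[X]} (h : s.degree < (M : WithBot ℕ)) (z : ℂ) :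
    s.eval z = ∑ i : Fin M, z ^ (i : ℕ) * s.coeff i := by
  rcases eq_or_ne s 0 with rfl | hs
  · simp
  · rw [eval_eq_sum_range' ((natDegree_lt_iff_degree_lt hs).mpr h), ← Fin.sum_univ_eq_sum_range]
    exact Finset.sum_congr rfl fun i _ => mul_comm _ _

/-- Every rational function `f` with no poles among the distinct points `w_1, …, w_n` admits
a realization `f(z) = Z(z) C (I - p(z)A)⁻¹ B` with `Z(z) = (1, z, …, z^{N-1})` and
`p(z) = ∏_j (z - w_j)^{μ_j}` of degree `N`, valid wherever `f` is defined and
`I - p(z)A` is invertible. -/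
theorem rational_realization (n N : ℕ) (w : Fin n → ℂ) (hw : Function.Injective w)
    (μ : Fin n → ℕ) (hμ : ∀ j, 1 ≤ μ j) (hN : ∑ j, μ j = N)
    (p : ℂ[X]) (hp : p = ∏ j, (X - C (w j)) ^ μ j)
    (f : RatFunc ℂ) (hf : ∀ j, f.denom.eval (w j) ≠ 0) :
    ∃ (m : ℕ) (A : Matrix (Fin m) (Fin m) ℂ) (B : Fin m → ℂ)
      (Cm : Matrix (Fin N) (Fin m) ℂ),
      ∀ z : ℂ, f.denom.eval z ≠ 0 → IsUnit (1 - p.eval z • A) →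
        f.num.eval z / f.denom.eval z
          = ∑ i : Fin N, z ^ (i : ℕ) * Cm.mulVec ((1 - p.eval z • A)⁻¹.mulVec B) i := by
  classical
  set u := f.num with hu
  set v := f.denom with hv
  have hvne : v ≠ 0 := f.denom_ne_zero
  -- `p` is monic of degree `N`
  have hpm : p.Monic := by
    rw [hp]; exact monic_prod_of_monic _ _ fun j _ => (monic_X_sub_C _).pow _
  have hpdeg : p.degree = (N : WithBot ℕ) := by
    rw [hp, degree_prod]
    have : ∀ j : Fin n, ((X - C (w j)) ^ μ j).degree = (μ j : WithBot ℕ) := by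
      intro j; rw [degree_pow, degree_X_sub_C, nsmul_eq_mul, mul_one]
    rw [Finset.sum_congr rfl fun j _ => this j, ← Nat.cast_sum, hN]
  -- coprimality and a Bézout relation
  have hco : IsCoprime v p := by
    rw [hp]
    apply IsCoprime.prod_right
    intro j _
    apply IsCoprime.pow_right
    exact ((irreducible_X_sub_C (w j)).coprime_iff_not_dvd.mpr
      (fun hdvd => hf j ((dvd_iff_isRoot.mp hdvd)))).symm
  obtain ⟨a, c, hac⟩ := hco
  -- dimension
  set m := max (u.natDegree + 1) (v.natDegree + N) with hm
  have hm1 : (u.degree : WithBot ℕ) < (m : WithBot ℕ) := by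
    refine lt_of_le_of_lt degree_le_natDegree ?_
    exact_mod_cast lt_of_lt_of_le (Nat.lt_succ_self _) (le_max_left _ _)
  have hm2 : v.natDegree + N ≤ m := le_max_right _ _
  have hmpos : 1 ≤ m := le_trans (Nat.succ_le_succ (Nat.zero_le _)) (le_max_left _ _)
  -- the linear "remainder" map and the "quotient" map
  set rl : ℂ[X] →ₗ[ℂ] ℂ[X] := (modByMonicHom p).comp (LinearMap.mulLeft ℂ a) with hrl
  have hrl_apply : ∀ s : ℂ[X], rl s = (a * s) %ₘ p := fun s => rfl
  set Tf : ℂ[X] → ℂ[X] := fun s => c * s + v * ((a * s) /ₘ p) with hTf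
  have hkey : ∀ s : ℂ[X], p * Tf s = s - rl s * v := by
    intro s
    rw [hrl_apply, hTf]
    have hmd := modByMonic_add_div (a * s) p
    linear_combination s * hac + v * hmd
  have hdegr : ∀ s : ℂ[X], (rl s).degree < (N : WithBot ℕ) := by
    intro s; rw [hrl_apply, ← hpdeg]; exact degree_modByMonic_lt _ hpm
  have hdegsub : ∀ s : ℂ[X], s.degree < (m : WithBot ℕ) →
      (s - rl s * v).degree < (m : WithBot ℕ) := by
    intro s hs
    refine lt_of_le_of_lt (degree_sub_le _ _) (max_lt hs ?_)
    rcases eq_or_ne (rl s) 0 with h0 | h0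
    · rw [h0, zero_mul, degree_zero]
      exact WithBot.bot_lt_coe _
    · rw [degree_mul, degree_eq_natDegree h0, degree_eq_natDegree hvne]
      have h1 : (rl s).natDegree < N :=
        (natDegree_lt_iff_degree_lt h0).mpr (hdegr s)
      exact_mod_cast lt_of_lt_of_le (by omega : (rl s).natDegree + v.natDegree < v.natDegree + N) hm2
  have hdegT : ∀ s : ℂ[X], s.degree < (m : WithBot ℕ) → (Tf s).degree < (m : WithBot ℕ) := by
    intro s hs
    have h1 : Tf s = (p * Tf s) /ₘ p := (mul_divByMonic_cancel_left _ hpm).symm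
    rw [h1, hkey s]
    exact lt_of_le_of_lt (degree_divByMonic_le _ _) (hdegsub s hs)
  -- the matrices
  refine ⟨m, Matrix.of (fun i j : Fin m => (Tf ((X : ℂ[X]) ^ (j : ℕ))).coeff i),
    fun i : Fin m => u.coeff (i : ℕ),
    Matrix.of (fun (i : Fin N) (j : Fin m) => (rl ((X : ℂ[X]) ^ (j : ℕ))).coeff i),
    ?_⟩
  intro z hvz hunit
  set M : Matrix (Fin m) (Fin m) ℂ :=
    1 - p.eval z • Matrix.of (fun i j : Fin m => (Tf ((X : ℂ[X]) ^ (j : ℕ))).coeff i) with hM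
  set x : Fin m → ℂ := M⁻¹.mulVec (fun i : Fin m => u.coeff (i : ℕ)) with hx
  have hMx : M.mulVec x = fun i : Fin m => u.coeff (i : ℕ) := by
    rw [hx, Matrix.mulVec_mulVec, Matrix.mul_nonsing_inv _ (M.isUnit_iff_isUnit_det.mp hunit),
      Matrix.one_mulVec]
  -- the polynomial ξ
  set ξ : ℂ[X] := ∑ j : Fin m, x j • (X : ℂ[X]) ^ (j : ℕ) with hξ
  have hξdeg : ξ.degree < (m : WithBot ℕ) := by
    refine lt_of_le_of_lt (degree_sum_le _ _) ?_
    rw [Finset.sup_lt_iff (WithBot.bot_lt_coe _)]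
    intro j _
    refine lt_of_le_of_lt (degree_smul_le _ _) ?_
    rw [degree_X_pow]
    exact_mod_cast j.isLt
  have hξcoeff : ∀ i : Fin m, ξ.coeff i = x i := by
    intro i
    rw [hξ, finset_sum_coeff]
    rw [Finset.sum_eq_single i]
    · simp
    · intro j _ hji
      simp only [coeff_smul, coeff_X_pow, smul_eq_mul]
      rw [if_neg (fun h => hji (Fin.ext h.symm)), mul_zero]
    · intro h; exact absurd (Finset.mem_univ i) h
  have hrξ : rl ξ = ∑ j : Fin m, x j • rl ((X : ℂ[X]) ^ (j : ℕ)) := by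
    rw [hξ, map_sum]
    exact Finset.sum_congr rfl fun j _ => by rw [map_smul]
  have hTξ : Tf ξ = ∑ j : Fin m, x j • Tf ((X : ℂ[X]) ^ (j : ℕ)) := by
    have hpne : p ≠ 0 := hpm.ne_zero
    apply mul_left_cancel₀ hpne
    rw [hkey, Finset.mul_sum, hrξ, hξ]
    have h1 : ∀ j : Fin m, p * (x j • Tf ((X : ℂ[X]) ^ (j : ℕ)))
        = x j • (X : ℂ[X]) ^ (j : ℕ) - x j • (rl ((X : ℂ[X]) ^ (j : ℕ)) * v) := by
      intro j; rw [mul_smul_comm, hkey, smul_sub]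
    rw [Finset.sum_congr rfl fun j _ => h1 j, Finset.sum_sub_distrib, Finset.sum_mul]
    congr 1
    exact Finset.sum_congr rfl fun j _ => smul_mul_assoc _ _ _
  have hAx : ∀ i : Fin m,
      (Matrix.of (fun i j : Fin m => (Tf ((X : ℂ[X]) ^ (j : ℕ))).coeff i)).mulVec x i
        = (Tf ξ).coeff i := by
    intro i
    rw [hTξ, finset_sum_coeff, Matrix.mulVec, dotProduct]
    exact Finset.sum_congr rfl fun j _ => by
      simp [Matrix.of_apply, coeff_smul, mul_comm]
  have hCx : ∀ i : Fin N,
      (Matrix.of (fun (i : Fin N) (j : Fin m) => (rl ((X : ℂ[X]) ^ (j : ℕ))).coeff i)).mulVec x i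
        = (rl ξ).coeff i := by
    intro i
    rw [hrξ, finset_sum_coeff, Matrix.mulVec, dotProduct]
    exact Finset.sum_congr rfl fun j _ => by
      simp [Matrix.of_apply, coeff_smul, mul_comm]
  -- coefficientwise identity from the matrix equation
  have hcoeffid : ∀ i : Fin m,
      ξ.coeff i - p.eval z * (Tf ξ).coeff i = u.coeff i := by
    intro i
    have := congrFun hMx i
    rw [hM, Matrix.sub_mulVec, Matrix.one_mulVec, Matrix.smul_mulVec] at this
    simpa [hξcoeff i, hAx i] using this
  -- evaluate everything at z
  have heval : ξ.eval z - p.eval z * (Tf ξ).eval z = u.eval z := by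
    rw [eval_fin_sum' hξdeg z, eval_fin_sum' (hdegT ξ hξdeg) z, eval_fin_sum' hm1 z,
      Finset.mul_sum, ← Finset.sum_sub_distrib]
    refine Finset.sum_congr rfl fun i _ => ?_
    rw [← hcoeffid i]; ring
  have hkeyz : p.eval z * (Tf ξ).eval z = ξ.eval z - (rl ξ).eval z * v.eval z := by
    have := congrArg (eval z) (hkey ξ)
    simpa [eval_mul, eval_sub] using this
  have hmain : u.eval z = (rl ξ).eval z * v.eval z := by
    rw [← heval, hkeyz]; ring
  rw [hmain, mul_div_assoc, div_self hvz, mul_one, eval_fin_sum' (hdegr ξ) z]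
  exact Finset.sum_congr rfl fun i _ => by rw [hCx i]
end

section
/- A rational function f admits a realization f(z) = Z(z)C(I - p(z)A)^{-1}B with A nilpotent if and only if in the decomposition f(z) = Z(z)F(p(z)) the vector function F is a (vector of) polynomial(s). Equivalently: if A is nilpotent then f is of the form Σ_{k=0}^{N-1} z^k F_k(p(z)) with all F_k polynomials. -/
/-!
If `A ^ n = 0`, the resolvent is the finite geometric series `(1 - λA)⁻¹ = ∑_{k<n} λ^k A^k`,
so every entry of `C (1 - λA)⁻¹ B` is a polynomial in `λ`. Conversely, polynomials of degree
`≤ d` are realized by the nilpotent shift `S` on `Fin (d + 1)` with `B = e₀`: then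
`S^k B = e_k`, so taking the `i`-th row of `C` to be the coefficient list of `F i` gives
`C (1 - λS)⁻¹ B = F(λ)`.
-/

open Polynomial Finset

namespace Matrix

variable {ι κ R : Type*} [Fintype κ] [DecidableEq κ] [CommRing R]

theorem inv_one_sub_of_pow_eq_zero {A : Matrix κ κ R} {n : ℕ} (hA : A ^ n = 0) :
    (1 - A)⁻¹ = ∑ k ∈ range n, A ^ k :=
  inv_eq_right_inv <| by rw [mul_neg_geom_sum, hA, sub_zero]

noncomputable def nilpotentTransferPoly (C : Matrix ι κ R) (A : Matrix κ κ R) (B : κ → R)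
    (n : ℕ) (i : ι) : R[X] :=
  ∑ k ∈ range n, monomial k (((C * A ^ k) *ᵥ B) i)

theorem mulVec_inv_one_sub_smul_mulVec_eq_eval {A : Matrix κ κ R} {n : ℕ} (hA : A ^ n = 0)
    (C : Matrix ι κ R) (B : κ → R) (c : R) (i : ι) :
    (C *ᵥ ((1 - c • A)⁻¹ *ᵥ B)) i = (nilpotentTransferPoly C A B n i).eval c := by
  have hcA : (c • A) ^ n = 0 := by rw [_root_.smul_pow, hA, smul_zero]
  rw [inv_one_sub_of_pow_eq_zero hcA, nilpotentTransferPoly, eval_finsetSum, sum_mulVec,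
    mulVec_sum, Finset.sum_apply]
  refine sum_congr rfl fun k _ => ?_
  rw [eval_monomial, _root_.smul_pow, smul_mulVec, mulVec_smul, mulVec_mulVec, Pi.smul_apply,
    smul_eq_mul, mul_comm]

def shift (d : ℕ) : Matrix (Fin d) (Fin d) R :=
  of fun i j => if (i : ℕ) = j + 1 then 1 else 0

theorem shift_pow_apply (d k : ℕ) (i j : Fin d) :
    (shift d ^ k : Matrix (Fin d) (Fin d) R) i j = if (i : ℕ) = j + k then 1 else 0 := by
  induction k generalizing j with
  | zero => simp [one_apply, Fin.ext_iff]
  | succ k ih =>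
    rw [pow_succ, mul_apply]
    simp only [ih]
    simp only [shift, of_apply, mul_ite, mul_one, mul_zero]
    rw [Fin.sum_univ_eq_sum_range (fun t => if t = (j : ℕ) + 1 then
      (if (i : ℕ) = t + k then (1 : R) else 0) else 0), sum_ite_eq']
    split_ifs <;> simp_all only [mem_range] <;> omega

theorem shift_pow_self (d : ℕ) : (shift d : Matrix (Fin d) (Fin d) R) ^ d = 0 := by
  ext i j
  rw [shift_pow_apply, if_neg (by omega), zero_apply]

theorem nilpotentTransferPoly_shift (d : ℕ) (F : ι → R[X]) (hF : ∀ i, (F i).natDegree ≤ d)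
    (i : ι) :
    nilpotentTransferPoly (of fun i (j : Fin (d + 1)) => (F i).coeff j) (shift (d + 1))
      (Pi.single 0 1) (d + 1) i = F i := by
  rw [nilpotentTransferPoly, as_sum_range' (F i) (d + 1) (Nat.lt_succ_of_le (hF i))]
  refine sum_congr rfl fun k hk => ?_
  rw [mulVec_single_one]
  simp only [col_apply, mul_apply, of_apply, shift_pow_apply, Fin.val_zero, zero_add, mul_ite,
    mul_one, mul_zero]
  rw [Fin.sum_univ_eq_sum_range (fun j => if j = k then (F i).coeff j else 0), sum_ite_eq',
    if_pos hk]

end Matrix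

theorem nilpotent_realization_iff_polynomial_general (N : ℕ) (p : ℂ[X]) :
    (∀ (m : ℕ) (A : Matrix (Fin m) (Fin m) ℂ) (B : Fin m → ℂ)
        (Cm : Matrix (Fin N) (Fin m) ℂ), IsNilpotent A →
      ∃ F : Fin N → ℂ[X],
        ∀ z : ℂ,
          ∑ i : Fin N, z ^ (i : ℕ) * Cm.mulVec ((1 - p.eval z • A)⁻¹.mulVec B) i
            = ∑ k : Fin N, z ^ (k : ℕ) * (F k).eval (p.eval z)) ∧
    (∀ F : Fin N → ℂ[X],
      ∃ (m : ℕ) (A : Matrix (Fin m) (Fin m) ℂ) (B : Fin m → ℂ)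
        (Cm : Matrix (Fin N) (Fin m) ℂ), IsNilpotent A ∧
        ∀ z : ℂ,
          ∑ k : Fin N, z ^ (k : ℕ) * (F k).eval (p.eval z)
            = ∑ i : Fin N, z ^ (i : ℕ) * Cm.mulVec ((1 - p.eval z • A)⁻¹.mulVec B) i) := by
  constructor
  · rintro m A B Cm ⟨n, hA⟩
    exact ⟨Matrix.nilpotentTransferPoly Cm A B n, fun z => by
      simp only [Matrix.mulVec_inv_one_sub_smul_mulVec_eq_eval hA]⟩
  · intro F
    let d := univ.sup fun i => (F i).natDegree
    have hF : ∀ i, (F i).natDegree ≤ d := fun i =>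
      le_sup (f := fun i => (F i).natDegree) (mem_univ i)
    refine ⟨d + 1, Matrix.shift (d + 1), Pi.single 0 1, Matrix.of fun i j => (F i).coeff j,
      ⟨d + 1, Matrix.shift_pow_self _⟩, fun z => ?_⟩
    simp only [Matrix.mulVec_inv_one_sub_smul_mulVec_eq_eval (Matrix.shift_pow_self _),
      Matrix.nilpotentTransferPoly_shift d F hF]

/-- A rational function admits a realization `f(z) = Z(z)C(I - p(z)A)⁻¹B` with `A`
nilpotent if and only if in the decomposition `f(z) = Z(z)F(p(z))` the vector function `F`
is a vector of polynomials.  Forward direction: if `A` is nilpotent the realization equals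
`∑_k z^k F_k(p(z))` with polynomials `F_k`; converse: any `∑_k z^k F_k(p(z))` with
polynomial `F_k` is realized with some nilpotent `A`. -/
theorem nilpotent_realization_iff_polynomial (N : ℕ) (hN : 1 ≤ N)
    (p : ℂ[X]) (hmonic : p.Monic) (hdeg : p.natDegree = N) :
    (∀ (m : ℕ) (A : Matrix (Fin m) (Fin m) ℂ) (B : Fin m → ℂ)
        (Cm : Matrix (Fin N) (Fin m) ℂ), IsNilpotent A →
      ∃ F : Fin N → ℂ[X],
        ∀ z : ℂ,
          ∑ i : Fin N, z ^ (i : ℕ) * Cm.mulVec ((1 - p.eval z • A)⁻¹.mulVec B) i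
            = ∑ k : Fin N, z ^ (k : ℕ) * (F k).eval (p.eval z)) ∧
    (∀ F : Fin N → ℂ[X],
      ∃ (m : ℕ) (A : Matrix (Fin m) (Fin m) ℂ) (B : Fin m → ℂ)
        (Cm : Matrix (Fin N) (Fin m) ℂ), IsNilpotent A ∧
        ∀ z : ℂ,
          ∑ k : Fin N, z ^ (k : ℕ) * (F k).eval (p.eval z)
            = ∑ i : Fin N, z ^ (i : ℕ) * Cm.mulVec ((1 - p.eval z • A)⁻¹.mulVec B) i) :=
  nilpotent_realization_iff_polynomial_general N p
end
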